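/- Let ε ∈ [0, 1/2). Then the supremum over p ∈ [0,1] of min( (1 − H(ε))·(1 − p) , H(ε·(1 − 2p) + p) − H(ε) ) is strictly greater than (1 − H(ε))/2. Here H denotes the binary entropy function H(x) = −x·log₂(x) − (1 − x)·log₂(1 − x) for x ∈ [0,1], with the convention 0·log₂0 = 0. -/

import Mathlib

/-!
At `p = 1/2` the relay output `ε(1 - 2p) + p` is uniform, so the second term of the minimum
equals `1 - H(ε)`, twice the conventional rate, while the first equals the conventional rate.
Moving `p` slightly below `1/2` strictly increases the first term and, by continuity of `H`,
keeps the second above `(1 - H(ε))/2`; here `1 - H(ε) > 0` because `ε ≠ 1/2`.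
-/

/-- The binary entropy function `H(x) = −x·log₂ x − (1 − x)·log₂(1 − x)`
(with the convention `0·log₂ 0 = 0`, automatic since `Real.logb 2 0 = 0`). -/
noncomputable def binEnt (x : ℝ) : ℝ :=
  -(x * Real.logb 2 x) - (1 - x) * Real.logb 2 (1 - x)

lemma binEnt_eq_binEntropy_div (x : ℝ) : binEnt x = Real.binEntropy x / Real.log 2 := by
  rw [binEnt, Real.binEntropy, Real.log_inv, Real.log_inv, Real.logb, Real.logb]
  ring

@[fun_prop]
lemma continuous_binEnt : Continuous binEnt := by
  simp only [funext binEnt_eq_binEntropy_div]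
  exact Real.binEntropy_continuous.div_const _

lemma binEnt_half : binEnt (1 / 2) = 1 := by
  rw [binEnt_eq_binEntropy_div, one_div, Real.binEntropy_two_inv,
    div_self (Real.log_pos one_lt_two).ne']

lemma binEnt_lt_one {x : ℝ} (hx : x ≠ 1 / 2) : binEnt x < 1 := by
  rw [binEnt_eq_binEntropy_div, div_lt_one (Real.log_pos one_lt_two)]
  exact Real.binEntropy_lt_log_two.2 (one_div (2 : ℝ) ▸ hx)

lemma exists_mem_Ioo_lt_of_continuousAt {g : ℝ → ℝ} {a b c : ℝ} (hab : a < b)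
    (hg : ContinuousAt g b) (hc : c < g b) : ∃ p ∈ Set.Ioo a b, c < g p := by
  have hlt : ∀ᶠ p in nhdsWithin b (Set.Iio b), c < g p :=
    (hg.tendsto.mono_left nhdsWithin_le_nhds).eventually_const_lt hc
  have hmem : ∀ᶠ p in nhdsWithin b (Set.Iio b), p ∈ Set.Ioo a b :=
    Ioo_mem_nhdsLT hab
  exact (hmem.and hlt).exists

/-- For symmetric BSC links with crossover probability `ε < 1/2`, the capacity of the
two-hop half-duplex relay channel (the max–min over the relay transmit probability)
is strictly larger than the conventional relaying rate `(1 − H(ε))/2`. -/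
theorem stmt_12 (ε : ℝ) (hε : ε ∈ Set.Ico (0 : ℝ) (1 / 2)) :
    (1 - binEnt ε) / 2 <
      ⨆ p : Set.Icc (0 : ℝ) 1,
        min ((1 - binEnt ε) * (1 - (p : ℝ)))
          (binEnt (ε * (1 - 2 * (p : ℝ)) + (p : ℝ)) - binEnt ε) := by
  have hgap : 0 < 1 - binEnt ε := sub_pos.2 (binEnt_lt_one hε.2.ne)
  set g : ℝ → ℝ := fun p => binEnt (ε * (1 - 2 * p) + p) - binEnt ε
  have hg_half : g (1 / 2) = 1 - binEnt ε := by norm_num [g, binEnt_half]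
  obtain ⟨p, hp, hgp⟩ := exists_mem_Ioo_lt_of_continuousAt (by norm_num : (0 : ℝ) < 1 / 2)
    (by fun_prop : ContinuousAt g (1 / 2)) (by rw [hg_half]; exact half_lt_self hgap)
  have hbdd : BddAbove (Set.range fun q : Set.Icc (0 : ℝ) 1 =>
      min ((1 - binEnt ε) * (1 - (q : ℝ))) (g q)) := by
    refine ⟨1 - binEnt ε, ?_⟩
    rintro _ ⟨⟨q, hq0, -⟩, rfl⟩
    exact (min_le_left _ _).trans (mul_le_of_le_one_right hgap.le (by linarith))
  refine (lt_min ?_ hgp).trans_le (le_ciSup hbdd ⟨p, hp.1.le, by linarith [hp.2]⟩)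
  nlinarith [hp.2]
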